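/- arXiv:0911.1713 — 2 statements merged into one kernel-verified Lean document; each statement's English description precedes it below -/
import Mathlib

section
/- For n ≥ 3, the pointwise stabiliser in Iso(n) of the set consisting of the identity permutation, the transpositions (1,k) for 2 ≤ k ≤ n, and the 3-cycle (1,2,3), is the trivial group: any isometry of (Sym(n), d_H) fixing each of these permutations is the identity map. -/
/-- The Hamming distance between two permutations of `Fin n`. -/
def hdist {n : ℕ} (φ ψ : Equiv.Perm (Fin n)) : ℕ :=
  (Finset.univ.filter fun i => φ i ≠ ψ i).card

/-!
Since `t` fixes `1`, it preserves the distance to `1`, i.e. the number of moved points, so it sends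
transpositions to transpositions; comparing distances to the fixed transpositions `(0 k)` shows
that every transposition is fixed. The distances to `1` and to all transpositions determine the
set of fixed points of a permutation, so `t` sends each 3-cycle to itself or to its inverse. Two
3-cycles sharing an arc `u ↦ v` are at distance 3, while reversing one of them gives distance 4;
this propagates the orientation from `(0 1 2)` to all 3-cycles. Finally a permutation `φ` is
determined by its distances to `1`, the transpositions and the 3-cycles: if `φ a ≠ ψ a`, the
3-cycle `φ⁻¹ a ↦ a ↦ φ a` separates them.
-/

open Equiv Finset

section Permutations

variable {α : Type*} [DecidableEq α]

lemma swap_apply_of_notMem_pair {a b i : α} (hi : i ∉ ({a, b} : Finset α)) :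
    swap a b i = i := by
  simp only [mem_insert, mem_singleton, not_or] at hi
  exact swap_apply_of_ne_of_ne hi.1 hi.2

lemma card_filter_pair {a b : α} (hab : a ≠ b) (p : α → Prop) [DecidablePred p] :
    #{i ∈ {a, b} | p i} = (if p a then 1 else 0) + (if p b then 1 else 0) := by
  rw [card_filter, sum_pair hab]

lemma card_filter_triple {a b c : α} (hab : a ≠ b) (hac : a ≠ c) (hbc : b ≠ c)
    (p : α → Prop) [DecidablePred p] :
    #{i ∈ {a, b, c} | p i} =
      (if p a then 1 else 0) + (if p b then 1 else 0) + (if p c then 1 else 0) := by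
  rw [card_filter, sum_insert (by simp [hab, hac]), sum_pair hbc, add_assoc]

/-- `cycle3 x y z` is the cycle `x ↦ y ↦ z ↦ x`. -/
def cycle3 (x y z : α) : Perm α := swap x z * swap x y

variable {x y z : α}

lemma cycle3_apply (w : α) : cycle3 x y z w = swap x z (swap x y w) := rfl

lemma cycle3_apply_left (hxy : x ≠ y) (hyz : y ≠ z) : cycle3 x y z x = y := by
  simp [cycle3, swap_apply_of_ne_of_ne hxy.symm hyz]

lemma cycle3_apply_mid : cycle3 x y z y = z := by
  simp [cycle3]

lemma cycle3_apply_right (hxz : x ≠ z) (hyz : y ≠ z) : cycle3 x y z z = x := by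
  simp [cycle3, swap_apply_of_ne_of_ne hxz.symm hyz.symm]

lemma cycle3_apply_of_notMem {w : α} (hw : w ∉ ({x, y, z} : Finset α)) :
    cycle3 x y z w = w := by
  simp only [mem_insert, mem_singleton, not_or] at hw
  simp [cycle3, swap_apply_of_ne_of_ne hw.1 hw.2.1, swap_apply_of_ne_of_ne hw.1 hw.2.2]

lemma cycle3_rotate (hxy : x ≠ y) (hxz : x ≠ z) (hyz : y ≠ z) :
    cycle3 x y z = cycle3 y z x := by
  ext i
  simp only [cycle3_apply, swap_apply_def]
  grind

lemma cycle3_ne_cycle3_reverse (hxy : x ≠ y) (hxz : x ≠ z) (hyz : y ≠ z) :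
    cycle3 x y z ≠ cycle3 x z y := fun h => by
  simpa [cycle3_apply_left hxy hyz, cycle3_apply_left hxz hyz.symm, hyz] using
    DFunLike.congr_fun h x

lemma eq_cycle3_or_eq_cycle3 {ψ : Perm α} (hxy : x ≠ y) (hxz : x ≠ z) (hyz : y ≠ z)
    (hfix : ∀ i ∉ ({x, y, z} : Finset α), ψ i = i) (hx : ψ x ≠ x) (hy : ψ y ≠ y)
    (hz : ψ z ≠ z) : ψ = cycle3 x y z ∨ ψ = cycle3 x z y := by
  have hmaps : ∀ i ∈ ({x, y, z} : Finset α), ψ i ∈ ({x, y, z} : Finset α) := fun i hi => by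
    by_contra h
    rw [ψ.injective (hfix _ h)] at h
    exact h hi
  simp only [mem_insert, mem_singleton, forall_eq_or_imp, forall_eq] at hmaps
  have hcases : (ψ x = y ∧ ψ y = z ∧ ψ z = x) ∨ (ψ x = z ∧ ψ z = y ∧ ψ y = x) := by
    grind [EquivLike.apply_eq_iff_eq]
  have hext : ∀ σ : Perm α, (∀ i ∉ ({x, y, z} : Finset α), σ i = i) →
      ψ x = σ x → ψ y = σ y → ψ z = σ z → ψ = σ := fun σ hσ hx hy hz => by
    ext i
    by_cases hi : i ∈ ({x, y, z} : Finset α)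
    · simp only [mem_insert, mem_singleton] at hi
      rcases hi with rfl | rfl | rfl <;> assumption
    · rw [hfix i hi, hσ i hi]
  rcases hcases with ⟨h1, h2, h3⟩ | ⟨h1, h2, h3⟩
  · left
    exact hext _ (fun i => cycle3_apply_of_notMem) (by rw [h1, cycle3_apply_left hxy hyz])
      (by rw [h2, cycle3_apply_mid]) (by rw [h3, cycle3_apply_right hxz hyz])
  · right
    refine hext _ (fun i hi => cycle3_apply_of_notMem (by simpa [or_comm] using hi)) ?_ ?_ ?_
    · rw [h1, cycle3_apply_left hxz hyz.symm]
    · rw [h3, cycle3_apply_right hxy hyz.symm]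
    · rw [h2, cycle3_apply_mid]

end Permutations

variable {n : ℕ}

lemma hdist_eq_zero_iff {φ ψ : Perm (Fin n)} : hdist φ ψ = 0 ↔ φ = ψ := by
  simp [hdist, Perm.ext_iff]

lemma hdist_one_eq_card_support (φ : Perm (Fin n)) : hdist φ 1 = #φ.support := by
  simp only [hdist, Perm.support, Perm.one_apply]
  congr 1

lemma hdist_eq_card {φ ψ : Perm (Fin n)} (s : Finset (Fin n))
    (h : ∀ i, φ i ≠ ψ i ↔ i ∈ s) : hdist φ ψ = #s := by
  simp only [hdist, h, filter_mem_eq_inter, univ_inter]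

lemma hdist_eq_card_add_card (φ σ : Perm (Fin n)) (s : Finset (Fin n))
    (hσ : ∀ i ∉ s, σ i = i) :
    hdist φ σ = #{i ∈ s | φ i ≠ σ i} + #{i ∈ sᶜ | φ i ≠ i} := by
  rw [hdist, ← card_filter_add_card_filter_not (· ∈ s), filter_filter, filter_filter]
  congr 2 <;> ext i <;> simp only [mem_filter, mem_univ, true_and, mem_compl] <;> grind

lemma hdist_add_card_filter (φ σ : Perm (Fin n)) (s : Finset (Fin n))
    (hσ : ∀ i ∉ s, σ i = i) :
    hdist φ σ + #{i ∈ s | φ i ≠ i} = hdist φ 1 + #{i ∈ s | φ i ≠ σ i} := by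
  rw [hdist_eq_card_add_card φ σ s hσ, hdist_eq_card_add_card φ 1 s fun _ _ => rfl]
  have h1 : #{i ∈ s | φ i ≠ (1 : Perm (Fin n)) i} = #{i ∈ s | φ i ≠ i} := rfl
  omega

lemma hdist_swap_swap_of_mem {a b c d : Fin n} (hab : a ≠ b)
    (hc : c ∉ ({a, b} : Finset (Fin n))) (hd : d ∈ ({a, b} : Finset (Fin n))) :
    hdist (swap a b) (swap c d) = 3 := by
  simp only [mem_insert, mem_singleton, not_or] at hc hd
  rw [hdist_eq_card {a, b, c}]
  · grind
  · intro i; simp only [swap_apply_def, mem_insert, mem_singleton]; grind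

lemma hdist_swap_swap_of_notMem {a b c d : Fin n} (hab : a ≠ b) (hcd : c ≠ d)
    (hc : c ∉ ({a, b} : Finset (Fin n))) (hd : d ∉ ({a, b} : Finset (Fin n))) :
    hdist (swap a b) (swap c d) = 4 := by
  simp only [mem_insert, mem_singleton, not_or] at hc hd
  rw [hdist_eq_card {a, b, c, d}]
  · grind
  · intro i; simp only [swap_apply_def, mem_insert, mem_singleton]; grind

lemma hdist_cycle3_cycle3_eq_three {u v w z : Fin n} (huv : u ≠ v) (huw : u ≠ w) (huz : u ≠ z)
    (hvw : v ≠ w) (hvz : v ≠ z) (hwz : w ≠ z) :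
    hdist (cycle3 u v w) (cycle3 u v z) = 3 := by
  rw [hdist_eq_card {v, w, z}]
  · grind
  · intro i; simp only [cycle3_apply, swap_apply_def, mem_insert, mem_singleton]; grind

lemma hdist_cycle3_cycle3_eq_four {u v w z : Fin n} (huv : u ≠ v) (huw : u ≠ w) (huz : u ≠ z)
    (hvw : v ≠ w) (hvz : v ≠ z) (hwz : w ≠ z) :
    hdist (cycle3 u w v) (cycle3 u v z) = 4 := by
  rw [hdist_eq_card {u, v, w, z}]
  · grind
  · intro i; simp only [cycle3_apply, swap_apply_def, mem_insert, mem_singleton]; grind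

section Separation

variable {φ ψ : Perm (Fin n)}

lemma apply_eq_self_of_hdist_swap_eq (h1 : hdist ψ 1 = hdist φ 1)
    (hτ : ∀ a b, a ≠ b → hdist ψ (swap a b) = hdist φ (swap a b)) {a : Fin n}
    (ha : ψ a = a) : φ a = a := by
  by_contra hφa
  obtain ⟨b, hb⟩ : ∃ b, φ a = b := ⟨_, rfl⟩
  have hab : a ≠ b := fun h => hφa (hb.trans h.symm)
  have hφ := hdist_add_card_filter φ (swap a b) {a, b} fun _ => swap_apply_of_notMem_pair
  have hψ := hdist_add_card_filter ψ (swap a b) {a, b} fun _ => swap_apply_of_notMem_pair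
  have hφb : φ b ≠ b := fun h => hab (φ.injective (hb.trans h.symm))
  have hψb : ψ b ≠ a := fun h => hab (ψ.injective (ha.trans h.symm))
  rw [card_filter_pair hab, card_filter_pair hab, swap_apply_left, swap_apply_right] at hφ hψ
  rw [hτ a b hab, h1] at hψ
  simp only [hb, ha, ne_eq, hab, hab.symm, hφb, hψb, not_false_eq_true, not_true_eq_false,
    if_true, if_false] at hφ hψ
  split_ifs at hφ hψ <;> omega

lemma apply_eq_self_iff_of_hdist_swap_eq (h1 : hdist ψ 1 = hdist φ 1)
    (hτ : ∀ a b, a ≠ b → hdist ψ (swap a b) = hdist φ (swap a b)) (a : Fin n) :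
    ψ a = a ↔ φ a = a :=
  ⟨apply_eq_self_of_hdist_swap_eq h1 hτ,
    apply_eq_self_of_hdist_swap_eq h1.symm fun a b hab => (hτ a b hab).symm⟩

lemma card_filter_ne_eq_of_hdist_eq {σ : Perm (Fin n)} {s : Finset (Fin n)}
    (h1 : hdist ψ 1 = hdist φ 1) (hfix : ∀ i, ψ i = i ↔ φ i = i) (hσ : ∀ i ∉ s, σ i = i)
    (h : hdist ψ σ = hdist φ σ) : #{i ∈ s | ψ i ≠ σ i} = #{i ∈ s | φ i ≠ σ i} := by
  have hψ := hdist_add_card_filter ψ σ s hσ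
  have hφ := hdist_add_card_filter φ σ s hσ
  have hmoved : #{i ∈ s | ψ i ≠ i} = #{i ∈ s | φ i ≠ i} := by simp only [ne_eq, hfix]
  omega

theorem eq_of_hdist_eq (h1 : hdist ψ 1 = hdist φ 1)
    (hτ : ∀ a b, a ≠ b → hdist ψ (swap a b) = hdist φ (swap a b))
    (hc : ∀ a b c, a ≠ b → a ≠ c → b ≠ c →
      hdist ψ (cycle3 a b c) = hdist φ (cycle3 a b c)) :
    ψ = φ := by
  have hfix := apply_eq_self_iff_of_hdist_swap_eq h1 hτ
  refine Equiv.ext fun a => ?_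
  by_contra hne
  obtain ⟨b, hb⟩ : ∃ b, ψ a = b := ⟨_, rfl⟩
  obtain ⟨c, hφa⟩ : ∃ c, φ a = c := ⟨_, rfl⟩
  have hbc : b ≠ c := by rwa [hb, hφa] at hne
  have hab : a ≠ b := fun h => hne (by rw [hb, ← h, (hfix a).1 (hb.trans h.symm)])
  have hac : a ≠ c := fun h => hne (by rw [hφa, ← h, (hfix a).2 (hφa.trans h.symm)])
  -- The pair `{a, b}` forces `φ b = a`; then `φ` agrees with the 3-cycle `b ↦ a ↦ c` at `b`
  -- and `a`, while `ψ` can agree with it only at `c`.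
  have hpair := card_filter_ne_eq_of_hdist_eq h1 hfix (fun _ => swap_apply_of_notMem_pair)
    (hτ a b hab)
  have htriple := card_filter_ne_eq_of_hdist_eq h1 hfix (fun _ => cycle3_apply_of_notMem)
    (hc b a c hab.symm hbc hac)
  rw [card_filter_pair hab, card_filter_pair hab, swap_apply_left, swap_apply_right] at hpair
  rw [card_filter_triple hab.symm hbc hac, card_filter_triple hab.symm hbc hac,
    cycle3_apply_left hab.symm hac, cycle3_apply_mid, cycle3_apply_right hbc hac] at htriple
  simp only [hb, hφa, ne_eq, hbc, not_false_eq_true, not_true_eq_false, if_true,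
    if_false] at hpair htriple
  split_ifs at hpair htriple <;> omega

end Separation

section Isometry

variable {t : Perm (Fin n) → Perm (Fin n)}

lemma injective_of_hdist_eq (hiso : ∀ φ ψ, hdist (t φ) (t ψ) = hdist φ ψ) :
    Function.Injective t := fun φ ψ h =>
  hdist_eq_zero_iff.1 (by rw [← hiso, h, hdist_eq_zero_iff])

lemma hdist_apply_eq_of_apply_eq (hiso : ∀ φ ψ, hdist (t φ) (t ψ) = hdist φ ψ)
    {σ : Perm (Fin n)} (hσ : t σ = σ) (φ : Perm (Fin n)) : hdist (t φ) σ = hdist φ σ := by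
  have h := hiso φ σ
  rwa [hσ] at h

lemma apply_swap_eq_swap (hiso : ∀ φ ψ, hdist (t φ) (t ψ) = hdist φ ψ) (hid : t 1 = 1)
    {x₀ : Fin n} (hstar : ∀ k, k ≠ x₀ → t (swap x₀ k) = swap x₀ k) {a b : Fin n}
    (hab : a ≠ b) : t (swap a b) = swap a b := by
  by_cases ha : a = x₀
  · subst ha; exact hstar b hab.symm
  by_cases hb : b = x₀
  · subst hb; rw [swap_comm]; exact hstar a hab
  obtain ⟨p, q, hpq, hψ⟩ : (t (swap a b)).IsSwap := by
    rw [← Perm.card_support_eq_two, ← hdist_one_eq_card_support, ← hid, hiso,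
      hdist_one_eq_card_support, Perm.card_support_swap hab]
  have hx₀ : x₀ ∉ ({p, q} : Finset (Fin n)) := by
    intro hmem
    obtain ⟨r, hr, hpqr⟩ : ∃ r, r ≠ x₀ ∧ swap p q = swap x₀ r := by
      simp only [mem_insert, mem_singleton] at hmem
      rcases hmem with rfl | rfl
      exacts [⟨q, hpq.symm, rfl⟩, ⟨p, hpq, swap_comm _ _⟩]
    have h := injective_of_hdist_eq hiso (hψ.trans (hpqr.trans (hstar r hr).symm))
    have h₀ := DFunLike.congr_fun h x₀
    rw [swap_apply_of_ne_of_ne (Ne.symm ha) (Ne.symm hb), swap_apply_left] at h₀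
    exact hr h₀.symm
  have hmem : ∀ c ∈ ({a, b} : Finset (Fin n)), c ∈ ({p, q} : Finset (Fin n)) := by
    intro c hc
    have hc₀ : c ≠ x₀ := by simp only [mem_insert, mem_singleton] at hc; grind
    by_contra hc'
    have h := hiso (swap a b) (swap x₀ c)
    rw [hψ, hstar c hc₀, hdist_swap_swap_of_notMem hpq (Ne.symm hc₀) hx₀ hc',
      hdist_swap_swap_of_mem hab (by simp [Ne.symm ha, Ne.symm hb]) hc] at h
    omega
  simp only [mem_insert, mem_singleton, forall_eq_or_imp, forall_eq] at hmem
  rw [hψ]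
  ext i
  simp only [swap_apply_def]
  grind

lemma apply_cycle3_eq_or (hiso : ∀ φ ψ, hdist (t φ) (t ψ) = hdist φ ψ) (hid : t 1 = 1)
    (hτ : ∀ a b, a ≠ b → t (swap a b) = swap a b) {x y z : Fin n} (hxy : x ≠ y) (hxz : x ≠ z)
    (hyz : y ≠ z) : t (cycle3 x y z) = cycle3 x y z ∨ t (cycle3 x y z) = cycle3 x z y := by
  have hfix := apply_eq_self_iff_of_hdist_swap_eq
    (hdist_apply_eq_of_apply_eq hiso hid (cycle3 x y z))
    fun a b hab => hdist_apply_eq_of_apply_eq hiso (hτ a b hab) (cycle3 x y z)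
  refine eq_cycle3_or_eq_cycle3 hxy hxz hyz
    (fun i hi => (hfix i).2 (cycle3_apply_of_notMem hi))
    (fun h => hxy ?_) (fun h => hyz ?_) (fun h => hxz ?_)
  · rw [← (hfix x).1 h, cycle3_apply_left hxy hyz]
  · rw [← (hfix y).1 h, cycle3_apply_mid]
  · rw [← (hfix z).1 h, cycle3_apply_right hxz hyz]

lemma apply_cycle3_eq_of_apply_cycle3_eq (hiso : ∀ φ ψ, hdist (t φ) (t ψ) = hdist φ ψ)
    (hid : t 1 = 1) (hτ : ∀ a b, a ≠ b → t (swap a b) = swap a b) {u v z : Fin n}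
    (huv : u ≠ v) (huz : u ≠ z) (hvz : v ≠ z) (hz : t (cycle3 u v z) = cycle3 u v z)
    {w : Fin n} (huw : u ≠ w) (hvw : v ≠ w) : t (cycle3 u v w) = cycle3 u v w := by
  by_cases hwz : w = z
  · rwa [hwz]
  refine (apply_cycle3_eq_or hiso hid hτ huv huw hvw).resolve_right fun h => ?_
  have hdist_eq := hdist_apply_eq_of_apply_eq hiso hz (cycle3 u v w)
  rw [h, hdist_cycle3_cycle3_eq_four huv huw huz hvw hvz hwz,
    hdist_cycle3_cycle3_eq_three huv huw huz hvw hvz hwz] at hdist_eq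
  omega

lemma apply_cycle3_reverse_eq (hiso : ∀ φ ψ, hdist (t φ) (t ψ) = hdist φ ψ)
    (hid : t 1 = 1) (hτ : ∀ a b, a ≠ b → t (swap a b) = swap a b) {x y z : Fin n}
    (hxy : x ≠ y) (hxz : x ≠ z) (hyz : y ≠ z) (h : t (cycle3 x y z) = cycle3 x y z) :
    t (cycle3 x z y) = cycle3 x z y :=
  (apply_cycle3_eq_or hiso hid hτ hxz hxy hyz.symm).resolve_right fun h' =>
    cycle3_ne_cycle3_reverse hxz hxy hyz.symm (injective_of_hdist_eq hiso (h'.trans h.symm))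

lemma apply_cycle3_eq_cycle3 (hiso : ∀ φ ψ, hdist (t φ) (t ψ) = hdist φ ψ)
    (hid : t 1 = 1) (hτ : ∀ a b, a ≠ b → t (swap a b) = swap a b) {x₀ x₁ x₂ : Fin n}
    (h₀₁ : x₀ ≠ x₁) (h₀₂ : x₀ ≠ x₂) (h₁₂ : x₁ ≠ x₂) (h₀ : t (cycle3 x₀ x₁ x₂) = cycle3 x₀ x₁ x₂)
    {a b c : Fin n} (hab : a ≠ b) (hac : a ≠ c) (hbc : b ≠ c) :
    t (cycle3 a b c) = cycle3 a b c := by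
  have chain := @apply_cycle3_eq_of_apply_cycle3_eq n t hiso hid hτ
  have hfrom₀ : ∀ b c, b ≠ x₀ → c ≠ x₀ → b ≠ c →
      t (cycle3 x₀ b c) = cycle3 x₀ b c := by
    intro b c hb hc hbc
    by_cases hb₁ : b = x₁
    · subst hb₁
      exact chain h₀₁ h₀₂ h₁₂ h₀ hc.symm hbc
    have h₀₁b := chain h₀₁ h₀₂ h₁₂ h₀ hb.symm (Ne.symm hb₁)
    have h₀b₁ := apply_cycle3_reverse_eq hiso hid hτ h₀₁ hb.symm (Ne.symm hb₁) h₀₁b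
    exact chain hb.symm h₀₁ hb₁ h₀b₁ hc.symm hbc
  by_cases ha : a = x₀
  · subst ha
    exact hfrom₀ b c hab.symm hac.symm hbc
  by_cases hb : b = x₀
  · subst hb
    rw [cycle3_rotate hab hac hbc]
    exact hfrom₀ c a hbc.symm ha hac.symm
  by_cases hc : c = x₀
  · subst hc
    rw [← cycle3_rotate (Ne.symm hac) (Ne.symm hbc) hab]
    exact hfrom₀ a b ha hb hab
  have hab₀ : t (cycle3 a b x₀) = cycle3 a b x₀ := by
    rw [← cycle3_rotate (Ne.symm ha) (Ne.symm hb) hab]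
    exact hfrom₀ a b ha hb hab
  exact chain hab ha hb hab₀ hac hbc

end Isometry

/-- For `n ≥ 3`, any isometry of `(Sym(n), d_H)` fixing the identity permutation,
each transposition `(1, k)` for `2 ≤ k ≤ n` (here: each `Equiv.swap 0 k`, `k ≠ 0`),
and the 3-cycle `(1, 2, 3)` (here: the cycle sending `0 ↦ 1 ↦ 2 ↦ 0`), is the
identity map: the pointwise stabiliser of this set in `Iso(n)` is trivial. -/
theorem pointwise_stabiliser_trivial (n : ℕ) (hn : 3 ≤ n)
    (t : Equiv.Perm (Fin n) → Equiv.Perm (Fin n))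
    (hiso : ∀ φ ψ, hdist (t φ) (t ψ) = hdist φ ψ)
    (hid : t 1 = 1)
    (hswap : ∀ k : Fin n, k ≠ ⟨0, by omega⟩ →
      t (Equiv.swap ⟨0, by omega⟩ k) = Equiv.swap ⟨0, by omega⟩ k)
    (hcycle : t (Equiv.swap ⟨0, by omega⟩ ⟨2, by omega⟩ *
                 Equiv.swap ⟨0, by omega⟩ ⟨1, by omega⟩)
             = Equiv.swap ⟨0, by omega⟩ ⟨2, by omega⟩ *
                 Equiv.swap ⟨0, by omega⟩ ⟨1, by omega⟩) :
    ∀ φ, t φ = φ := by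
  intro φ
  have hτ : ∀ a b : Fin n, a ≠ b → t (swap a b) = swap a b :=
    fun a b hab => apply_swap_eq_swap hiso hid hswap hab
  have hc : ∀ a b c : Fin n, a ≠ b → a ≠ c → b ≠ c → t (cycle3 a b c) = cycle3 a b c :=
    fun a b c hab hac hbc =>
      apply_cycle3_eq_cycle3 hiso hid hτ (by simp) (by simp) (by simp) hcycle hab hac hbc
  exact eq_of_hdist_eq (hdist_apply_eq_of_apply_eq hiso hid φ)
    (fun a b hab => hdist_apply_eq_of_apply_eq hiso (hτ a b hab) φ)
    (fun a b c hab hac hbc => hdist_apply_eq_of_apply_eq hiso (hc a b c hab hac hbc) φ)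
end

section
/- There exists a (7,4)-permutation code of size 336, i.e., a subset C ⊆ Sym(7) with |C| = 336 such that d_H(φ, ψ) ≥ 4 for all distinct φ, ψ ∈ C. -/
open Equiv Finset Pointwise

theorem hdist_eq_card_support {n : ℕ} (φ ψ : Perm (Fin n)) :
    hdist φ ψ = (φ⁻¹ * ψ).support.card := by
  rw [hdist, Perm.support]
  congr 1
  refine filter_congr fun i _ => ?_
  rw [Perm.mul_apply, Ne, Ne, Perm.inv_eq_iff_eq, eq_comm]

theorem Finset.disjoint_smul_finset_iff {G β : Type*} [Group G] [MulAction G β] [DecidableEq β]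
    {a : G} {s t : Finset β} : Disjoint (a • s) (a • t) ↔ Disjoint s t := by
  simp_rw [← disjoint_coe, coe_smul_finset, Set.disjoint_smul_set]

namespace Equiv.Perm

variable {α : Type*} [DecidableEq α]

theorem exists_finset_card_eq_fixed_of_card_support_add_le [Fintype α] {ρ : Perm α} {k : ℕ}
    (h : ρ.support.card + k ≤ Fintype.card α) :
    ∃ F : Finset α, F.card = k ∧ ∀ y ∈ F, ρ y = y := by
  obtain ⟨F, hF, hcard⟩ := exists_subset_card_eq (s := ρ.supportᶜ) (n := k)
    (by rw [card_compl]; omega)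
  exact ⟨F, hcard, fun y hy => notMem_support.mp (mem_compl.mp (hF hy))⟩

theorem smul_finset_eq_self_of_subset {ρ : Perm α} {F s : Finset α}
    (hfix : ∀ y ∈ F, ρ y = y) (hs : s ⊆ F) : ρ • s = s := by
  rw [smul_finset_def]
  exact (image_congr fun y hy => hfix y (hs hy)).trans image_id'

theorem smul_finset_compl_eq_self [Fintype α] {ρ : Perm α} {F : Finset α}
    (hfix : ∀ y ∈ F, ρ y = y) : ρ • Fᶜ = Fᶜ := by
  rw [compl_eq_univ_sdiff, smul_finset_sdiff, smul_finset_univ,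
    smul_finset_eq_self_of_subset hfix subset_rfl]

end Equiv.Perm

def fanoPoint : Fin 7 → Fin 3 → ZMod 2 :=
  ![![1, 0, 0], ![0, 1, 0], ![1, 1, 0], ![0, 0, 1], ![1, 0, 1], ![0, 1, 1], ![1, 1, 1]]

def fano : Finset (Finset (Fin 7)) :=
  {{0, 1, 2}, {0, 3, 4}, {0, 5, 6}, {1, 3, 5}, {1, 4, 6}, {2, 3, 6}, {2, 4, 5}}

def fanoTwist : Perm (Fin 7) := c[2, 3, 4, 5]

theorem mem_fano_iff (ℓ : Finset (Fin 7)) :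
    ℓ ∈ fano ↔ ℓ.card = 3 ∧ ∑ i ∈ ℓ, fanoPoint i = 0 := by
  revert ℓ
  decide +kernel

theorem fano_eq_of_two_le_card_inter :
    ∀ ℓ₁ ∈ fano, ∀ ℓ₂ ∈ fano, 2 ≤ (ℓ₁ ∩ ℓ₂).card → ℓ₁ = ℓ₂ := by
  decide +kernel

theorem exists_mem_fano_erase_subset :
    ∀ F : Finset (Fin 7), F.card = 4 → ∀ y ∉ F, ∃ ℓ ∈ fano, y ∈ ℓ ∧ ℓ.erase y ⊆ F := by
  decide +kernel

theorem exists_mem_fano_subset_or_eq_compl :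
    ∀ F : Finset (Fin 7), F.card = 4 → ∃ ℓ ∈ fano, ℓ ⊆ F ∨ ℓ = Fᶜ := by
  decide +kernel

theorem disjoint_fano_fanoTwist_smul : Disjoint fano (fanoTwist • fano) := by
  decide +kernel

theorem fanoTwist_smul_fano_ne : fanoTwist • fano ≠ fano := by
  intro h
  have hdisj := disjoint_fano_fanoTwist_smul
  rw [h] at hdisj
  have hmem : {0, 1, 2} ∈ fano := by decide
  exact disjoint_left.mp hdisj hmem hmem

theorem eq_one_of_smul_fano_eq {θ : Perm (Fin 7)} (hθ : θ • fano = fano) {F : Finset (Fin 7)}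
    (hF : F.card = 4) (hfix : ∀ y ∈ F, θ y = y) : θ = 1 := by
  refine Equiv.ext fun y => ?_
  rw [Perm.one_apply]
  by_cases hy : y ∈ F
  · exact hfix y hy
  obtain ⟨ℓ, hℓ, hyℓ, hsub⟩ := exists_mem_fano_erase_subset F hF y hy
  have hθℓ : θ • ℓ = ℓ := by
    refine fano_eq_of_two_le_card_inter _ (hθ ▸ smul_mem_smul_finset hℓ) ℓ hℓ ?_
    calc 2 = (ℓ.erase y).card := by rw [card_erase_of_mem hyℓ, ((mem_fano_iff ℓ).mp hℓ).1]
      _ ≤ (θ • ℓ ∩ ℓ).card := by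
        refine card_le_card (subset_inter ?_ (erase_subset y ℓ))
        rw [← Perm.smul_finset_eq_self_of_subset hfix hsub]
        exact smul_finset_subset_smul_finset (erase_subset y ℓ)
  have hθy : θ y ∈ ℓ := hθℓ ▸ smul_mem_smul_finset hyℓ
  by_contra hne
  exact hne (θ.injective (hfix _ (hsub (mem_erase.mpr ⟨hne, hθy⟩))))

theorem not_disjoint_fano_smul_fano {θ : Perm (Fin 7)} {F : Finset (Fin 7)}
    (hF : F.card = 4) (hfix : ∀ y ∈ F, θ y = y) : ¬ Disjoint fano (θ • fano) := by
  rw [not_disjoint_iff]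
  obtain ⟨ℓ, hℓ, hsub | rfl⟩ := exists_mem_fano_subset_or_eq_compl F hF
  · exact ⟨ℓ, hℓ, Perm.smul_finset_eq_self_of_subset hfix hsub ▸ smul_mem_smul_finset hℓ⟩
  · exact ⟨Fᶜ, hℓ, Perm.smul_finset_compl_eq_self hfix ▸ smul_mem_smul_finset hℓ⟩

theorem four_le_hdist_of_smul_fano {φ ψ : Perm (Fin 7)}
    (h : φ • fano = ψ • fano ∨ Disjoint (φ • fano) (ψ • fano)) (hne : φ ≠ ψ) :
    4 ≤ hdist φ ψ := by
  rw [hdist_eq_card_support]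
  by_contra! hlt
  obtain ⟨F, hF, hfix⟩ := Perm.exists_finset_card_eq_fixed_of_card_support_add_le
    (ρ := φ⁻¹ * ψ) (k := 4) (by simp only [Fintype.card_fin]; omega)
  rcases h with h | h
  · refine hne (inv_mul_eq_one.mp (eq_one_of_smul_fano_eq ?_ hF hfix))
    rw [mul_smul, ← h, inv_smul_smul]
  · refine not_disjoint_fano_smul_fano hF hfix ?_
    rwa [mul_smul, ← disjoint_smul_finset_iff (a := φ), smul_inv_smul]

theorem fanoPoint_ne_zero (i : Fin 7) : fanoPoint i ≠ 0 := by
  revert i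
  decide

noncomputable def fanoPointEquiv : Fin 7 ≃ {v : Fin 3 → ZMod 2 // v ≠ 0} :=
  .ofBijective (fun i => ⟨fanoPoint i, fanoPoint_ne_zero i⟩) (by decide +kernel)

noncomputable def fanoPerm (A : GL (Fin 3) (ZMod 2)) : Perm (Fin 7) :=
  fanoPointEquiv.symm.permCongr <|
    (MulAction.toPerm A : Perm (Fin 3 → ZMod 2)).subtypePerm fun _ => smul_ne_zero_iff_ne A

theorem fanoPoint_fanoPerm (A : GL (Fin 3) (ZMod 2)) (i : Fin 7) :
    fanoPoint (fanoPerm A i) = A • fanoPoint i :=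
  congrArg Subtype.val (fanoPointEquiv.apply_symm_apply _)

theorem fanoPerm_smul_fano (A : GL (Fin 3) (ZMod 2)) : fanoPerm A • fano = fano := by
  refine eq_of_subset_of_card_le ?_ (card_smul_finset _ _).ge
  intro m hm
  obtain ⟨ℓ, hℓ, rfl⟩ := mem_smul_finset.mp hm
  rw [mem_fano_iff] at hℓ ⊢
  refine ⟨(card_smul_finset _ _).trans hℓ.1, ?_⟩
  rw [smul_finset_def, sum_image fun _ _ _ _ h => MulAction.injective (fanoPerm A) h]
  simp only [Perm.smul_def, fanoPoint_fanoPerm, ← smul_sum, hℓ.2, smul_zero]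

theorem fanoPerm_injective : Function.Injective fanoPerm := by
  intro A B hAB
  have hsmul (v : Fin 3 → ZMod 2) : A • v = B • v := by
    obtain rfl | hv := eq_or_ne v 0
    · rw [smul_zero, smul_zero]
    obtain ⟨i, rfl⟩ : ∃ i, fanoPoint i = v :=
      ⟨fanoPointEquiv.symm ⟨v, hv⟩, congrArg Subtype.val (fanoPointEquiv.apply_symm_apply _)⟩
    rw [← fanoPoint_fanoPerm, ← fanoPoint_fanoPerm, hAB]
  exact Units.ext (Matrix.ext_of_mulVec_single fun k => hsmul _)

theorem card_GL_fin_three_zmod_two : Nat.card (GL (Fin 3) (ZMod 2)) = 168 := by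
  rw [Matrix.card_GL_field]
  simp [Fin.prod_univ_three]

def fanoCode : Set (Perm (Fin 7)) :=
  Set.range fanoPerm ∪ Set.range fun A => fanoTwist * fanoPerm A

theorem smul_fano_of_mem_fanoCode {τ : Perm (Fin 7)} (hτ : τ ∈ fanoCode) :
    τ • fano = fano ∨ τ • fano = fanoTwist • fano := by
  rcases hτ with ⟨A, rfl⟩ | ⟨A, rfl⟩
  · exact .inl (fanoPerm_smul_fano A)
  · exact .inr (by rw [mul_smul, fanoPerm_smul_fano])

theorem smul_fano_eq_or_disjoint_of_mem_fanoCode {φ ψ : Perm (Fin 7)} (hφ : φ ∈ fanoCode)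
    (hψ : ψ ∈ fanoCode) : φ • fano = ψ • fano ∨ Disjoint (φ • fano) (ψ • fano) := by
  have hdisj := disjoint_fano_fanoTwist_smul
  rcases smul_fano_of_mem_fanoCode hφ with hφ | hφ <;>
    rcases smul_fano_of_mem_fanoCode hψ with hψ | hψ <;> rw [hφ, hψ]
  exacts [.inl rfl, .inr hdisj, .inr hdisj.symm, .inl rfl]

theorem ncard_fanoCode : fanoCode.ncard = 336 := by
  have hdisj : Disjoint (Set.range fanoPerm) (Set.range fun A => fanoTwist * fanoPerm A) := by
    refine Set.disjoint_left.mpr ?_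
    rintro _ ⟨A, rfl⟩ ⟨B, hB : fanoTwist * fanoPerm B = fanoPerm A⟩
    apply fanoTwist_smul_fano_ne
    nth_rw 1 [← fanoPerm_smul_fano B]
    rw [← mul_smul, hB, fanoPerm_smul_fano]
  rw [fanoCode, Set.ncard_union_eq hdisj, Set.ncard_range_of_injective fanoPerm_injective,
    Set.ncard_range_of_injective fun A B h => fanoPerm_injective (mul_left_cancel h),
    card_GL_fin_three_zmod_two]

/-- There exists a `(7,4)`-permutation code of size `336`. -/
theorem exists_74_code_of_size_336 :
    ∃ C : Finset (Equiv.Perm (Fin 7)), C.card = 336 ∧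
      ∀ φ ∈ C, ∀ ψ ∈ C, φ ≠ ψ → 4 ≤ hdist φ ψ := by
  refine ⟨fanoCode.toFinite.toFinset, by rw [← Set.ncard_eq_toFinset_card, ncard_fanoCode], ?_⟩
  simp only [Set.Finite.mem_toFinset]
  exact fun φ hφ ψ hψ => four_le_hdist_of_smul_fano (smul_fano_eq_or_disjoint_of_mem_fanoCode hφ hψ)
end
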